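/- arXiv:1706.07334 — 2 statements merged into one kernel-verified Lean document; each statement's English description precedes it below -/
import Mathlib

section
/- Fix integers ℓ, n ≥ 1, a field k, and an n×n matrix q = (q_{i,j}) over k with q_{i,i} = 1, q_{i,j} = q_{j,i}^{-1} for i ≠ j, and q_{i,j}^ℓ = 1 for all i,j. Let A = k_q[x_1,…,x_n] be the quantum affine space, i.e. the quotient of the free associative k-algebra on x_1,…,x_n by the two-sided ideal generated by the elements x_i x_j − q_{i,j} x_j x_i, and let Z_0 ⊆ A be the unital subalgebra generated by x_1^ℓ,…,x_n^ℓ. Then: (1) A is a free Z_0-module of rank ℓ^n with basis the restricted monomials {x_1^{a_1}⋯x_n^{a_n} : 0 ≤ a_i < ℓ}; (2) the Z_0-linear projection Φ of A onto the summand Z_0·x_1^{ℓ-1}⋯x_n^{ℓ-1} (relative to this basis) is a Frobenius form, so Z_0 ⊆ A is a free Frobenius extension of rank ℓ^n; and (3) for any abelian group G and any d_1,…,d_n ∈ G, endowing A with the G-grading in which x_i has degree d_i makes Z_0 ⊆ A a free-graded Frobenius extension with homogeneous Frobenius form Φ of degree −∑_{i=1}^n (ℓ−1)d_i. -/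
/-!
The monomials `x^a` multiply by the bicharacter `c(a, b) = ∏_{j < i} q_{ij}^{a_i b_j}`,
`x^a x^b = c(a, b) x^{a+b}`, and they are linearly independent because `A` acts on `k[ℕⁿ]` as
the left regular representation of the `c`-twisted monoid algebra. As `q_{ij}^ℓ = 1`, `c` is
trivial on `ℓℕⁿ`, so `Z₀` is spanned by the central monomials `x^{ℓm}`, and
`x^{ℓm + s} = x^{ℓm} x^s` for `s < ℓ` makes the restricted monomials a `Z₀`-basis. The coefficient of `Φ y` at
`x^{ℓm}` is the coefficient of `y` at `x^{ℓm + (ℓ-1,…,ℓ-1)}`. Multiplying by the complementary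
monomial `x^{(ℓ-1) - s}`, on either side, moves a nonzero coefficient of `y` at `x^{ℓm + s}` there
up to a unit, which gives nondegeneracy; the rescaled complementary monomials form a basis dual
to the restricted monomials under `Φ`, which writes every `Z₀`-linear form as `Φ (r * ·)`.
Finally `Φ` lowers degrees by the degree of `x^{(ℓ-1,…,ℓ-1)}`.
-/

noncomputable section

variable (k : Type*) [Field k] (n ℓ : ℕ) (q : Fin n → Fin n → k)

/-- The defining relations of quantum affine space: `xᵢxⱼ = q_{ij} xⱼxᵢ`. -/
def QASRel : FreeAlgebra k (Fin n) → FreeAlgebra k (Fin n) → Prop := fun a b =>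
  ∃ i j : Fin n, a = FreeAlgebra.ι k i * FreeAlgebra.ι k j ∧
    b = q i j • (FreeAlgebra.ι k j * FreeAlgebra.ι k i)

/-- Quantum affine space `k_q[x₁,…,x_n]`. -/
def QAS := RingQuot (QASRel k n q)

instance : Ring (QAS k n q) := by unfold QAS; infer_instance

instance : Algebra k (QAS k n q) := by unfold QAS; infer_instance

/-- The generators `x₁,…,x_n` of quantum affine space. -/
def qasX (i : Fin n) : QAS k n q :=
  RingQuot.mkAlgHom k (QASRel k n q) (FreeAlgebra.ι k i)

/-- The ordered monomial `x₁^{a₁} ⋯ x_n^{a_n}`. -/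
def qasMonomial (a : Fin n → ℕ) : QAS k n q :=
  ((List.finRange n).map fun i => qasX k n q i ^ a i).prod

/-- The `ℓ`-centre `Z₀ ⊆ A`, generated by `x₁^ℓ, …, x_n^ℓ`. -/
def qasCentre : Subalgebra k (QAS k n q) :=
  Algebra.adjoin k (Set.range fun i : Fin n => qasX k n q i ^ ℓ)

/-- Frobenius form for the extension `S ⊆ R`. -/
def IsFrobeniusForm {k R : Type*} [Field k] [Ring R] [Algebra k R]
    (S : Subalgebra k R) (Φ : R →ₗ[S] S) : Prop :=
  (∀ I : Ideal R, (∀ x ∈ I, Φ x = 0) → I = ⊥) ∧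
  (∀ I : Submodule Rᵐᵒᵖ R, (∀ x ∈ I, Φ x = 0) → I = ⊥) ∧
  (∀ f : R →ₗ[S] S, ∃ r : R, ∀ q : R, f q = Φ (r * q))

/-- The grading of quantum affine space by an abelian group `G` in which `xᵢ` has
degree `dᵢ`: the piece of degree `g` is spanned by the monomials of degree `g`. -/
def qasGrading {G : Type*} [CommGroup G] (d : Fin n → G) (g : G) :
    Submodule k (QAS k n q) :=
  Submodule.span k
    {m | ∃ a : Fin n → ℕ, m = qasMonomial k n q a ∧ (∏ i, d i ^ a i) = g}


theorem Pi.induction_on_add_single {ι : Type*} [Fintype ι] [DecidableEq ι]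
    {P : (ι → ℕ) → Prop} (zero : P 0) (add_single : ∀ a i, P a → P (a + Pi.single i 1))
    (a : ι → ℕ) : P a := by
  induction h : ∑ i, a i generalizing a with
  | zero =>
    obtain rfl : a = 0 := funext fun i => Finset.sum_eq_zero_iff.1 h i (Finset.mem_univ i)
    exact zero
  | succ N ih =>
    obtain ⟨i, hi⟩ : ∃ i, a i ≠ 0 := by
      by_contra! h'
      simp [h'] at h
    have ha : a - Pi.single i 1 + Pi.single i 1 = a := by
      ext j
      rcases eq_or_ne j i with rfl | hj
      · simp only [Pi.add_apply, Pi.sub_apply, Pi.single_eq_same]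
        omega
      · simp [hj]
    rw [← ha] at h ⊢
    exact add_single _ i (ih _ (by simpa [Finset.sum_add_distrib] using h))

theorem Module.Basis.repr_map_apply_eq_mul {ι R M : Type*} [DecidableEq ι] [CommSemiring R]
    [AddCommMonoid M] [Module R M] (b : Module.Basis ι R M) (f : M →ₗ[R] M) {i j : ι} {c : R}
    (h : ∀ a, b.repr (f (b a)) j = if a = i then c else 0) (x : M) :
    b.repr (f x) j = c * b.repr x i := by
  have := b.ext (f₁ := Finsupp.lapply j ∘ₗ b.repr.toLinearMap ∘ₗ f)
    (f₂ := c • (Finsupp.lapply i ∘ₗ b.repr.toLinearMap)) fun a => by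
      simp [h, Finsupp.single_apply]
  exact LinearMap.congr_fun this x

theorem Module.Basis.isInternal_span_image_fiber {ι R M G : Type*} [Ring R] [AddCommMonoid M]
    [Module R M] [DecidableEq G] (b : Module.Basis ι R M) (f : ι → G) :
    DirectSum.IsInternal fun g => Submodule.span R (b '' (f ⁻¹' {g})) := by
  let := Module.addCommMonoidToAddCommGroup R (M := M)
  refine DirectSum.isInternal_submodule_of_iSupIndep_of_iSup_eq_top (fun g => ?_) ?_
  · refine (b.linearIndependent.disjoint_span_image (s := f ⁻¹' {g}) (t := f ⁻¹' {g}ᶜ)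
      ((disjoint_compl_right (a := ({g} : Set G))).preimage f)).mono_right
      (iSup₂_le fun g' hg' => ?_)
    exact Submodule.span_mono (Set.image_mono fun i hi => by simp_all)
  · refine eq_top_iff.2 (b.span_eq.symm.trans_le (Submodule.span_le.2 ?_))
    rintro _ ⟨i, rfl⟩
    exact Submodule.mem_iSup_of_mem (f i) (Submodule.subset_span ⟨i, rfl, rfl⟩)

theorem isFrobeniusForm_of_nondegenerate {k R : Type*} [Field k] [Ring R] [Algebra k R]
    {S : Subalgebra k R} {Φ : R →ₗ[S] S} (hl : ∀ x ≠ 0, ∃ r, Φ (r * x) ≠ 0)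
    (hr : ∀ x ≠ 0, ∃ r, Φ (x * r) ≠ 0) (hΦ : ∀ f : R →ₗ[S] S, ∃ r, ∀ p, f p = Φ (r * p)) :
    IsFrobeniusForm S Φ := by
  refine ⟨fun I hI => eq_bot_iff.2 fun x hx => ?_, fun I hI => eq_bot_iff.2 fun x hx => ?_, hΦ⟩
  · by_contra h
    obtain ⟨r, hr⟩ := hl x h
    exact hr (hI _ (I.mul_mem_left r hx))
  · by_contra h
    obtain ⟨r, hr⟩ := hr x h
    exact hr (hI _ (I.smul_mem (MulOpposite.op r) hx))

theorem exists_forall_eq_mul_of_dualBasis {k R ι : Type*} [CommSemiring k] [Semiring R]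
    [Algebra k R] [Fintype ι] [DecidableEq ι] {S : Subalgebra k R} [SMulCommClass S R R]
    (b : Module.Basis ι S R) (Φ : R →ₗ[S] S) (b' : ι → R)
    (hb' : ∀ i j, Φ (b' i * b j) = if i = j then 1 else 0) (f : R →ₗ[S] S) :
    ∃ r, ∀ p, f p = Φ (r * p) := by
  set r := ∑ i, f (b i) • b' i
  let g : R →ₗ[S] S :=
    { toFun := fun p => Φ (r * p)
      map_add' := fun p p' => by rw [mul_add, map_add]
      map_smul' := fun z p => by rw [mul_smul_comm, map_smul]; rfl }
  have hfg : f = g := b.ext fun j => by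
    simp [g, r, Finset.sum_mul, smul_mul_assoc, hb']
  exact ⟨r, fun p => LinearMap.congr_fun hfg p⟩

section Cocycle

variable {M : Type*} [CommMonoid M] {n : ℕ} (q : Fin n → Fin n → M)

def qasCocycle (a b : Fin n → ℕ) : M :=
  ∏ i, ∏ j, if j < i then q i j ^ (a i * b j) else 1

theorem qasCocycle_add_left (a a' b : Fin n → ℕ) :
    qasCocycle q (a + a') b = qasCocycle q a b * qasCocycle q a' b := by
  simp only [qasCocycle, ← Finset.prod_mul_distrib]
  refine Finset.prod_congr rfl fun i _ => Finset.prod_congr rfl fun j _ => ?_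
  split_ifs <;> simp [add_mul, pow_add]

theorem qasCocycle_add_right (a b b' : Fin n → ℕ) :
    qasCocycle q a (b + b') = qasCocycle q a b * qasCocycle q a b' := by
  simp only [qasCocycle, ← Finset.prod_mul_distrib]
  refine Finset.prod_congr rfl fun i _ => Finset.prod_congr rfl fun j _ => ?_
  split_ifs <;> simp [mul_add, pow_add]

@[simp]
theorem qasCocycle_zero_left (b : Fin n → ℕ) : qasCocycle q 0 b = 1 := by
  simp [qasCocycle]

@[simp]
theorem qasCocycle_zero_right (a : Fin n → ℕ) : qasCocycle q a 0 = 1 := by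
  simp [qasCocycle]

theorem qasCocycle_single_right (a : Fin n → ℕ) (j : Fin n) :
    qasCocycle q a (Pi.single j 1) = ∏ i, if j < i then q i j ^ a i else 1 := by
  refine Finset.prod_congr rfl fun i _ => ?_
  rw [Finset.prod_eq_single j (fun j' _ hj' => by simp [hj']) (by simp)]
  simp

theorem qasCocycle_single_left (i : Fin n) (s : ℕ) (b : Fin n → ℕ) :
    qasCocycle q (Pi.single i s) b = ∏ j, if j < i then q i j ^ (s * b j) else 1 := by
  rw [qasCocycle, Finset.prod_eq_single i (fun i' _ hi' => by simp [hi']) (by simp)]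
  simp

theorem qasCocycle_single_self (i : Fin n) (s t : ℕ) :
    qasCocycle q (Pi.single i s) (Pi.single i t) = 1 := by
  rw [qasCocycle_single_left]
  refine Finset.prod_eq_one fun j _ => ?_
  split_ifs with h
  · simp [h.ne]
  · rfl

theorem qasCocycle_single_single (i j : Fin n) :
    qasCocycle q (Pi.single i 1) (Pi.single j 1) = if j < i then q i j else 1 := by
  rw [qasCocycle_single_left, Finset.prod_eq_single j (fun j' _ hj' => by simp [hj']) (by simp)]
  simp

theorem qasCocycle_single_single_eq_mul (hq1 : ∀ i, q i i = 1)
    (hq2 : ∀ i j, i ≠ j → q i j * q j i = 1) (i j : Fin n) :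
    qasCocycle q (Pi.single i 1) (Pi.single j 1)
      = q i j * qasCocycle q (Pi.single j 1) (Pi.single i 1) := by
  simp only [qasCocycle_single_single]
  rcases lt_trichotomy i j with h | rfl | h
  · rw [if_neg h.not_gt, if_pos h, hq2 i j h.ne]
  · simp [hq1]
  · rw [if_pos h, if_neg h.not_gt, mul_one]

theorem qasCocycle_nsmul_left {ℓ : ℕ} (hq : ∀ i j, q i j ^ ℓ = 1) (a b : Fin n → ℕ) :
    qasCocycle q (ℓ • a) b = 1 :=
  Finset.prod_eq_one fun i _ => Finset.prod_eq_one fun j _ => by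
    split_ifs
    · rw [Pi.smul_apply, smul_eq_mul, mul_assoc, pow_mul, hq, one_pow]
    · rfl

end Cocycle

section QuantumAffineSpace

variable {k n}

theorem qasCocycle_ne_zero (hq1 : ∀ i, q i i = 1) (hq2 : ∀ i j, i ≠ j → q i j * q j i = 1)
    (a b : Fin n → ℕ) : qasCocycle q a b ≠ 0 := by
  have hq : ∀ i j, q i j ≠ 0 := fun i j => by
    rcases eq_or_ne i j with rfl | h
    · simp [hq1]
    · exact left_ne_zero_of_mul_eq_one (hq2 i j h)
  refine Finset.prod_ne_zero_iff.2 fun i _ => Finset.prod_ne_zero_iff.2 fun j _ => ?_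
  split_ifs
  · exact pow_ne_zero _ (hq i j)
  · exact one_ne_zero

theorem qasX_mul_qasX (i j : Fin n) :
    qasX k n q i * qasX k n q j = q i j • (qasX k n q j * qasX k n q i) := by
  have h := RingQuot.mkAlgHom_rel k (s := QASRel k n q) ⟨i, j, rfl, rfl⟩
  rw [map_mul, map_smul, map_mul] at h
  exact h

theorem qasX_pow_mul_qasX (i j : Fin n) (t : ℕ) :
    qasX k n q i ^ t * qasX k n q j = q i j ^ t • (qasX k n q j * qasX k n q i ^ t) := by
  induction t with
  | zero => simp
  | succ t ih =>
    rw [pow_succ, mul_assoc, qasX_mul_qasX, mul_smul_comm, ← mul_assoc, ih, smul_mul_assoc,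
      smul_smul, mul_assoc, ← pow_succ, ← pow_succ']

theorem qas_induction {P : QAS k n q → Prop} (algebraMap : ∀ r, P (algebraMap k _ r))
    (qasX : ∀ i, P (qasX k n q i)) (add : ∀ x y, P x → P y → P (x + y))
    (mul : ∀ x y, P x → P y → P (x * y)) (x : QAS k n q) : P x := by
  obtain ⟨w, rfl⟩ := RingQuot.mkAlgHom_surjective k (QASRel k n q) x
  induction w using FreeAlgebra.induction with
  | grade0 r => rw [AlgHom.commutes]; exact algebraMap r
  | grade1 i => exact qasX i
  | mul a b ha hb => rw [map_mul]; exact mul _ _ ha hb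
  | add a b ha hb => rw [map_add]; exact add _ _ ha hb

def qasLift {B : Type*} [Semiring B] [Algebra k B] (y : Fin n → B)
    (hy : ∀ i j, y i * y j = q i j • (y j * y i)) : QAS k n q →ₐ[k] B :=
  RingQuot.liftAlgHom k ⟨FreeAlgebra.lift k y, by
    rintro _ _ ⟨i, j, rfl, rfl⟩
    simp only [map_mul, map_smul, FreeAlgebra.lift_ι_apply]
    exact hy i j⟩

theorem qasLift_qasX {B : Type*} [Semiring B] [Algebra k B] (y : Fin n → B)
    (hy : ∀ i j, y i * y j = q i j • (y j * y i)) (i : Fin n) :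
    qasLift q y hy (qasX k n q i) = y i :=
  (RingQuot.liftAlgHom_mkAlgHom_apply k _ _ _).trans (FreeAlgebra.lift_ι_apply _ _)

@[simp]
theorem qasMonomial_zero : qasMonomial k n q 0 = 1 :=
  List.prod_eq_one fun x hx => by
    obtain ⟨i, _, rfl⟩ := List.mem_map.1 hx
    simp

theorem list_prod_mul_qasX (L : List (Fin n)) (a : Fin n → ℕ) (j : Fin n) :
    (L.map fun i => qasX k n q i ^ a i).prod * qasX k n q j
      = (L.map fun i => q i j ^ a i).prod •
          (qasX k n q j * (L.map fun i => qasX k n q i ^ a i).prod) := by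
  induction L with
  | nil => simp
  | cons i L ih =>
    simp only [List.map_cons, List.prod_cons]
    rw [mul_assoc, ih, mul_smul_comm, ← mul_assoc, qasX_pow_mul_qasX, smul_mul_assoc, smul_smul,
      mul_assoc, mul_comm]

theorem sorted_list_prod_mul_qasX {L : List (Fin n)} (hL : L.Pairwise (· < ·)) {j : Fin n}
    (hj : j ∈ L) (a : Fin n → ℕ) :
    (L.map fun i => qasX k n q i ^ a i).prod * qasX k n q j
      = (L.map fun i => if j < i then q i j ^ a i else 1).prod •
          (L.map fun i => qasX k n q i ^ (a + Pi.single j 1 : Fin n → ℕ) i).prod := by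
  induction L with
  | nil => cases hj
  | cons i L ih =>
    obtain ⟨hlt, hL⟩ := List.pairwise_cons.1 hL
    simp only [List.map_cons, List.prod_cons, mul_assoc]
    rcases List.mem_cons.1 hj with rfl | hj
    · have hq : ∀ i ∈ L, (if j < i then q i j ^ a i else 1) = q i j ^ a i :=
        fun i hi => if_pos (hlt i hi)
      have hx : ∀ i ∈ L,
          qasX k n q i ^ (a + Pi.single j 1 : Fin n → ℕ) i = qasX k n q i ^ a i :=
        fun i hi => by simp [(hlt i hi).ne']
      rw [list_prod_mul_qasX, List.map_congr_left hq, List.map_congr_left hx, mul_smul_comm,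
        ← mul_assoc, ← pow_succ, if_neg (lt_irrefl j), one_mul]
      simp
    · have hij : i < j := hlt j hj
      rw [ih hL hj, mul_smul_comm, if_neg hij.not_gt, one_mul]
      simp [hij.ne]

theorem qasMonomial_mul_qasX (a : Fin n → ℕ) (j : Fin n) :
    qasMonomial k n q a * qasX k n q j
      = qasCocycle q a (Pi.single j 1) • qasMonomial k n q (a + Pi.single j 1) := by
  rw [qasMonomial, sorted_list_prod_mul_qasX q (List.pairwise_lt_finRange n)
    (List.mem_finRange j), qasCocycle_single_right, Fin.prod_univ_def]
  rfl

theorem qasX_pow_eq_qasMonomial (i : Fin n) (t : ℕ) :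
    qasX k n q i ^ t = qasMonomial k n q (Pi.single i t) := by
  induction t with
  | zero => simp
  | succ t ih =>
    rw [pow_succ, ih, qasMonomial_mul_qasX, qasCocycle_single_self, one_smul, ← Pi.single_add]

theorem span_qasMonomial : Submodule.span k (Set.range (qasMonomial k n q)) = ⊤ := by
  set S := Submodule.span k (Set.range (qasMonomial k n q))
  have hmul : ∀ y, ∀ x ∈ S, x * y ∈ S := by
    refine qas_induction q (fun r x hx => ?_) (fun j x hx => ?_)
      (fun y y' hy hy' x hx => ?_) (fun y y' hy hy' x hx => ?_)
    · rw [← Algebra.commutes, ← Algebra.smul_def]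
      exact S.smul_mem r hx
    · induction hx using Submodule.span_induction with
      | mem x hx =>
        obtain ⟨a, rfl⟩ := hx
        rw [qasMonomial_mul_qasX]
        exact S.smul_mem _ (Submodule.subset_span ⟨_, rfl⟩)
      | zero => simp
      | add x x' _ _ h h' => rw [add_mul]; exact S.add_mem h h'
      | smul r x _ h => rw [smul_mul_assoc]; exact S.smul_mem r h
    · rw [mul_add]; exact S.add_mem (hy x hx) (hy' x hx)
    · rw [← mul_assoc]; exact hy' _ (hy x hx)
  refine eq_top_iff.2 fun x _ => ?_
  simpa using hmul x 1 (Submodule.subset_span ⟨0, qasMonomial_zero q⟩)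

/-- Left multiplication by `x^b` in the `qasCocycle`-twisted monoid algebra of `ℕⁿ`, which is what
`QAS k n q` turns out to be. -/
def twistedShift (b : Fin n → ℕ) : Module.End k ((Fin n → ℕ) →₀ k) :=
  Finsupp.lsum k fun a => qasCocycle q b a • Finsupp.lsingle (b + a)

theorem twistedShift_single (b a : Fin n → ℕ) (x : k) :
    twistedShift q b (Finsupp.single a x) = qasCocycle q b a • Finsupp.single (b + a) x := by
  simp [twistedShift]

theorem twistedShift_zero : twistedShift q 0 = 1 :=
  Finsupp.lhom_ext fun a x => by simp [twistedShift_single]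

theorem twistedShift_mul (b b' : Fin n → ℕ) :
    twistedShift q b * twistedShift q b' = qasCocycle q b b' • twistedShift q (b + b') :=
  Finsupp.lhom_ext fun a x => by
    simp only [Module.End.mul_apply, LinearMap.smul_apply, twistedShift_single, map_smul,
      smul_smul, qasCocycle_add_left, qasCocycle_add_right, add_assoc]
    ring_nf

theorem twistedShift_single_mul_comm (hq1 : ∀ i, q i i = 1)
    (hq2 : ∀ i j, i ≠ j → q i j * q j i = 1) (i j : Fin n) :
    twistedShift q (Pi.single i 1) * twistedShift q (Pi.single j 1)
      = q i j • (twistedShift q (Pi.single j 1) * twistedShift q (Pi.single i 1)) := by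
  rw [twistedShift_mul, twistedShift_mul, smul_smul, add_comm,
    qasCocycle_single_single_eq_mul q hq1 hq2]

variable (hq1 : ∀ i, q i i = 1) (hq2 : ∀ i j, i ≠ j → q i j * q j i = 1)

def qasRegularRep : QAS k n q →ₐ[k] Module.End k ((Fin n → ℕ) →₀ k) :=
  qasLift q (fun i => twistedShift q (Pi.single i 1)) (twistedShift_single_mul_comm q hq1 hq2)

theorem qasRegularRep_qasMonomial (a : Fin n → ℕ) :
    qasRegularRep q hq1 hq2 (qasMonomial k n q a) = twistedShift q a := by
  induction a using Pi.induction_on_add_single with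
  | zero => rw [qasMonomial_zero, map_one, twistedShift_zero]
  | add_single a j ih =>
    have h := congrArg (qasRegularRep q hq1 hq2) (qasMonomial_mul_qasX q a j)
    rw [map_mul, map_smul, ih, qasRegularRep, qasLift_qasX, twistedShift_mul] at h
    exact smul_right_injective _ (qasCocycle_ne_zero q hq1 hq2 a _) h.symm

theorem qasRegularRep_qasMonomial_apply (a : Fin n → ℕ) :
    qasRegularRep q hq1 hq2 (qasMonomial k n q a) (Finsupp.single 0 1) = Finsupp.single a 1 := by
  simp [qasRegularRep_qasMonomial, twistedShift_single]

theorem linearIndependent_qasMonomial (hq1 : ∀ i, q i i = 1)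
    (hq2 : ∀ i j, i ≠ j → q i j * q j i = 1) : LinearIndependent k (qasMonomial k n q) := by
  refine LinearIndependent.of_comp
    (LinearMap.applyₗ (Finsupp.single 0 1) ∘ₗ (qasRegularRep q hq1 hq2).toLinearMap) ?_
  convert (Finsupp.basisSingleOne (R := k) (ι := Fin n → ℕ)).linearIndependent
  ext a : 1
  simp [qasRegularRep_qasMonomial_apply]

def qasBasis : Module.Basis (Fin n → ℕ) k (QAS k n q) :=
  .mk (linearIndependent_qasMonomial q hq1 hq2) (span_qasMonomial q).ge

@[simp]
theorem qasBasis_apply (a : Fin n → ℕ) : qasBasis q hq1 hq2 a = qasMonomial k n q a :=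
  Module.Basis.mk_apply _ _ _

@[simp]
theorem qasBasis_repr_qasMonomial (a : Fin n → ℕ) :
    (qasBasis q hq1 hq2).repr (qasMonomial k n q a) = Finsupp.single a 1 := by
  rw [← qasBasis_apply q hq1 hq2, Module.Basis.repr_self]

theorem qasBasis_repr_eq_qasRegularRep_apply (x : QAS k n q) :
    (qasBasis q hq1 hq2).repr x = qasRegularRep q hq1 hq2 x (Finsupp.single 0 1) := by
  have := (qasBasis q hq1 hq2).ext (f₁ := (qasBasis q hq1 hq2).repr.toLinearMap)
    (f₂ := LinearMap.applyₗ (Finsupp.single 0 1) ∘ₗ (qasRegularRep q hq1 hq2).toLinearMap)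
    fun a => by simp [qasRegularRep_qasMonomial_apply]
  exact LinearMap.congr_fun this x

theorem qasMonomial_mul (hq1 : ∀ i, q i i = 1) (hq2 : ∀ i j, i ≠ j → q i j * q j i = 1)
    (a b : Fin n → ℕ) :
    qasMonomial k n q a * qasMonomial k n q b
      = qasCocycle q a b • qasMonomial k n q (a + b) := by
  refine (qasBasis q hq1 hq2).repr.injective ?_
  simp only [qasBasis_repr_eq_qasRegularRep_apply, map_mul, map_smul, qasRegularRep_qasMonomial,
    twistedShift_mul]
  rfl

theorem qasBasis_repr_qasMonomial_mul (r a : Fin n → ℕ) (x : QAS k n q) :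
    (qasBasis q hq1 hq2).repr (qasMonomial k n q r * x) (r + a)
      = qasCocycle q r a * (qasBasis q hq1 hq2).repr x a :=
  (qasBasis q hq1 hq2).repr_map_apply_eq_mul (Algebra.lmul k _ (qasMonomial k n q r))
    (fun a' => by
      rcases eq_or_ne a' a with rfl | h <;> simp [qasMonomial_mul q hq1 hq2, *])
    x

theorem qasBasis_repr_mul_qasMonomial (r a : Fin n → ℕ) (x : QAS k n q) :
    (qasBasis q hq1 hq2).repr (x * qasMonomial k n q r) (a + r)
      = qasCocycle q a r * (qasBasis q hq1 hq2).repr x a :=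
  (qasBasis q hq1 hq2).repr_map_apply_eq_mul
    ((Algebra.lmul k _).toLinearMap.flip (qasMonomial k n q r))
    (fun a' => by
      rcases eq_or_ne a' a with rfl | h <;> simp [qasMonomial_mul q hq1 hq2, *])
    x

variable {ℓ}

theorem qasX_pow_mem_center (hq3 : ∀ i j, q i j ^ ℓ = 1) (i : Fin n) :
    qasX k n q i ^ ℓ ∈ Subalgebra.center k (QAS k n q) :=
  Subalgebra.mem_center_iff.2 fun b => by
    induction b using qas_induction q with
    | algebraMap r => exact Algebra.commutes r _
    | qasX j => rw [qasX_pow_mul_qasX, hq3, one_smul]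
    | add x y hx hy => rw [add_mul, mul_add, hx, hy]
    | mul x y hx hy => rw [mul_assoc, hy, ← mul_assoc, hx, mul_assoc]

theorem qasCentre_le_center (hq3 : ∀ i j, q i j ^ ℓ = 1) :
    qasCentre k n ℓ q ≤ Subalgebra.center k (QAS k n q) :=
  Algebra.adjoin_le (Set.range_subset_iff.2 (qasX_pow_mem_center q hq3))

theorem qasMonomial_nsmul_mem_qasCentre (m : Fin n → ℕ) :
    qasMonomial k n q (ℓ • m) ∈ qasCentre k n ℓ q :=
  Subalgebra.list_prod_mem _ fun x hx => by
    obtain ⟨i, _, rfl⟩ := List.mem_map.1 hx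
    rw [Pi.smul_apply, smul_eq_mul, pow_mul]
    exact pow_mem (Algebra.subset_adjoin (Set.mem_range_self i)) _

theorem mem_span_of_mem_qasCentre (hq1 : ∀ i, q i i = 1)
    (hq2 : ∀ i j, i ≠ j → q i j * q j i = 1) (hq3 : ∀ i j, q i j ^ ℓ = 1) {z : QAS k n q}
    (hz : z ∈ qasCentre k n ℓ q) :
    z ∈ Submodule.span k (Set.range fun m => qasMonomial k n q (ℓ • m)) := by
  induction hz using Algebra.adjoin_induction with
  | mem x hx =>
    obtain ⟨i, rfl⟩ := hx
    refine Submodule.subset_span ⟨Pi.single i 1, ?_⟩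
    dsimp only
    rw [qasX_pow_eq_qasMonomial, ← Pi.single_smul, smul_eq_mul, mul_one]
  | algebraMap r =>
    rw [Algebra.algebraMap_eq_smul_one, ← qasMonomial_zero q, ← smul_zero ℓ]
    exact Submodule.smul_mem _ r (Submodule.subset_span ⟨0, rfl⟩)
  | add x y _ _ hx hy => exact Submodule.add_mem _ hx hy
  | mul x y _ _ hx hy =>
    have hxy := Submodule.mul_mem_mul hx hy
    rw [Submodule.span_mul_span] at hxy
    refine Submodule.span_le.2 ?_ hxy
    rintro _ ⟨_, ⟨m, rfl⟩, _, ⟨m', rfl⟩, rfl⟩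
    dsimp only
    rw [qasMonomial_mul q hq1 hq2, qasCocycle_nsmul_left q hq3, one_smul, ← smul_add]
    exact Submodule.subset_span ⟨_, rfl⟩

variable [NeZero ℓ]

theorem nsmul_div_add_residue (a : Fin n → ℕ) :
    (ℓ • fun i => a i / ℓ) + (fun i => (Fin.ofNat ℓ (a i) : ℕ)) = a :=
  funext fun i => by simp [Nat.div_add_mod]

theorem nsmul_add_residue_inj {m m' : Fin n → ℕ} {s s' : Fin n → Fin ℓ} :
    (ℓ • m + fun i => (s i : ℕ)) = ℓ • m' + (fun i => (s' i : ℕ)) ↔ m = m' ∧ s = s' := by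
  refine ⟨fun h => ?_, fun h => by rw [h.1, h.2]⟩
  have hℓ : 0 < ℓ := Nat.pos_of_neZero ℓ
  have hdiv i := congrArg (· / ℓ) (congrFun h i)
  have hmod i := congrArg (· % ℓ) (congrFun h i)
  simp only [Pi.add_apply, Pi.smul_apply, smul_eq_mul, Nat.mul_add_div hℓ, Nat.mul_add_mod,
    Nat.div_eq_of_lt (s _).isLt, Nat.div_eq_of_lt (s' _).isLt, Nat.mod_eq_of_lt (s _).isLt,
    Nat.mod_eq_of_lt (s' _).isLt, add_zero] at hdiv hmod
  exact ⟨funext hdiv, funext fun i => Fin.ext (hmod i)⟩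

theorem qasBasis_repr_mul_qasMonomial_residue (hq3 : ∀ i j, q i j ^ ℓ = 1) {z : QAS k n q}
    (hz : z ∈ qasCentre k n ℓ q) (m : Fin n → ℕ) (s s' : Fin n → Fin ℓ) :
    (qasBasis q hq1 hq2).repr (z * qasMonomial k n q fun i => (s i : ℕ))
        (ℓ • m + fun i => (s' i : ℕ))
      = if s' = s then (qasBasis q hq1 hq2).repr z (ℓ • m) else 0 := by
  have hz' := mem_span_of_mem_qasCentre q hq1 hq2 hq3 hz
  clear hz
  induction hz' using Submodule.span_induction with
  | mem x hx =>
    obtain ⟨m', rfl⟩ := hx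
    dsimp only
    rw [qasMonomial_mul q hq1 hq2, qasCocycle_nsmul_left q hq3, one_smul,
      qasBasis_repr_qasMonomial, qasBasis_repr_qasMonomial]
    split_ifs with hs
    · subst hs
      simp only [Finsupp.single_apply, add_left_inj]
    · exact Finsupp.single_eq_of_ne fun h => hs (nsmul_add_residue_inj.1 h).2
  | zero => simp
  | add x y _ _ hx hy =>
    rw [add_mul, LinearEquiv.map_add, Finsupp.add_apply, hx, hy, LinearEquiv.map_add,
      Finsupp.add_apply]
    split_ifs <;> simp
  | smul r x _ hx =>
    rw [smul_mul_assoc, LinearEquiv.map_smul, Finsupp.smul_apply, hx, LinearEquiv.map_smul,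
      Finsupp.smul_apply]
    split_ifs <;> simp

theorem qasBasis_repr_of_mem_qasCentre (hq3 : ∀ i j, q i j ^ ℓ = 1) {z : QAS k n q}
    (hz : z ∈ qasCentre k n ℓ q) (a : Fin n → ℕ) :
    (qasBasis q hq1 hq2).repr z a = if (fun i => Fin.ofNat ℓ (a i)) = 0
      then (qasBasis q hq1 hq2).repr z (ℓ • fun i => a i / ℓ) else 0 := by
  have h := qasBasis_repr_mul_qasMonomial_residue q hq1 hq2 hq3 hz (fun i => a i / ℓ) 0
    (fun i => Fin.ofNat ℓ (a i))
  have h0 : (fun i => ((0 : Fin n → Fin ℓ) i : ℕ)) = 0 := funext fun i => Fin.val_zero ℓ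
  rwa [h0, qasMonomial_zero, mul_one, nsmul_div_add_residue] at h

theorem eq_of_mem_qasCentre_of_repr_nsmul_eq (hq3 : ∀ i j, q i j ^ ℓ = 1) {z z' : QAS k n q}
    (hz : z ∈ qasCentre k n ℓ q) (hz' : z' ∈ qasCentre k n ℓ q)
    (h : ∀ m, (qasBasis q hq1 hq2).repr z (ℓ • m) = (qasBasis q hq1 hq2).repr z' (ℓ • m)) :
    z = z' :=
  (qasBasis q hq1 hq2).repr.injective <| Finsupp.ext fun a => by
    rw [qasBasis_repr_of_mem_qasCentre q hq1 hq2 hq3 hz,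
      qasBasis_repr_of_mem_qasCentre q hq1 hq2 hq3 hz', h]

theorem qasBasis_repr_sum_smul_qasMonomial_residue (hq3 : ∀ i j, q i j ^ ℓ = 1)
    (g : (Fin n → Fin ℓ) → qasCentre k n ℓ q) (m : Fin n → ℕ) (s : Fin n → Fin ℓ) :
    (qasBasis q hq1 hq2).repr (∑ s', g s' • qasMonomial k n q fun i => (s' i : ℕ))
        (ℓ • m + fun i => (s i : ℕ))
      = (qasBasis q hq1 hq2).repr (g s) (ℓ • m) := by
  simp only [map_sum, Finsupp.coe_finsetSum, Finset.sum_apply, Subalgebra.smul_def, smul_eq_mul,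
    qasBasis_repr_mul_qasMonomial_residue q hq1 hq2 hq3 (g _).2, Finset.sum_ite_eq,
    Finset.mem_univ, if_true]

theorem linearIndependent_qasMonomial_residue (hq1 : ∀ i, q i i = 1)
    (hq2 : ∀ i j, i ≠ j → q i j * q j i = 1) (hq3 : ∀ i j, q i j ^ ℓ = 1) :
    LinearIndependent (qasCentre k n ℓ q)
      fun s : Fin n → Fin ℓ => qasMonomial k n q fun i => (s i : ℕ) := by
  rw [Fintype.linearIndependent_iffₛ]
  refine fun f g hfg s => Subtype.ext <|
    eq_of_mem_qasCentre_of_repr_nsmul_eq q hq1 hq2 hq3 (f s).2 (g s).2 fun m => ?_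
  rw [← qasBasis_repr_sum_smul_qasMonomial_residue q hq1 hq2 hq3, hfg,
    qasBasis_repr_sum_smul_qasMonomial_residue q hq1 hq2 hq3]

theorem qasMonomial_eq_smul_residue (hq1 : ∀ i, q i i = 1)
    (hq2 : ∀ i j, i ≠ j → q i j * q j i = 1) (hq3 : ∀ i j, q i j ^ ℓ = 1) (a : Fin n → ℕ) :
    qasMonomial k n q a
      = (⟨_, qasMonomial_nsmul_mem_qasCentre q fun i => a i / ℓ⟩ : qasCentre k n ℓ q) •
          qasMonomial k n q fun i => (Fin.ofNat ℓ (a i) : ℕ) := by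
  rw [Subalgebra.smul_def, smul_eq_mul, qasMonomial_mul q hq1 hq2, qasCocycle_nsmul_left q hq3,
    one_smul, nsmul_div_add_residue]

theorem span_qasMonomial_residue (hq1 : ∀ i, q i i = 1)
    (hq2 : ∀ i j, i ≠ j → q i j * q j i = 1) (hq3 : ∀ i j, q i j ^ ℓ = 1) :
    ⊤ ≤ Submodule.span (qasCentre k n ℓ q)
      (Set.range fun s : Fin n → Fin ℓ => qasMonomial k n q fun i => (s i : ℕ)) := by
  rintro x -
  have hx : x ∈ Submodule.span k (Set.range (qasMonomial k n q)) := by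
    rw [span_qasMonomial]; trivial
  refine (Submodule.span_le (p := (Submodule.span _ _).restrictScalars k)).2 ?_ hx
  rintro _ ⟨a, rfl⟩
  rw [qasMonomial_eq_smul_residue q hq1 hq2 hq3 a]
  exact Submodule.smul_mem _ _ (Submodule.subset_span (Set.mem_range_self _))

variable (hq3 : ∀ i j, q i j ^ ℓ = 1)

def restrictedMonomialBasis : Module.Basis (Fin n → Fin ℓ) (qasCentre k n ℓ q) (QAS k n q) :=
  .mk (linearIndependent_qasMonomial_residue q hq1 hq2 hq3) (span_qasMonomial_residue q hq1 hq2 hq3)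

theorem restrictedMonomialBasis_apply (s : Fin n → Fin ℓ) :
    restrictedMonomialBasis q hq1 hq2 hq3 s = qasMonomial k n q fun i => (s i : ℕ) :=
  Module.Basis.mk_apply _ _ _

theorem restrictedMonomialBasis_repr_qasMonomial (a : Fin n → ℕ) :
    (restrictedMonomialBasis q hq1 hq2 hq3).repr (qasMonomial k n q a)
      = Finsupp.single (fun i => Fin.ofNat ℓ (a i))
          (⟨_, qasMonomial_nsmul_mem_qasCentre q fun i => a i / ℓ⟩ : qasCentre k n ℓ q) := by
  rw [qasMonomial_eq_smul_residue q hq1 hq2 hq3 a, ← restrictedMonomialBasis_apply q hq1 hq2 hq3,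
    map_smul, Module.Basis.repr_self, Finsupp.smul_single, smul_eq_mul, mul_one]

theorem rank_qasCentre (hq1 : ∀ i, q i i = 1) (hq2 : ∀ i j, i ≠ j → q i j * q j i = 1)
    (hq3 : ∀ i j, q i j ^ ℓ = 1) :
    Module.rank (qasCentre k n ℓ q) (QAS k n q) = ((ℓ ^ n : ℕ) : Cardinal) := by
  have : IsMulCommutative (qasCentre k n ℓ q) := ⟨⟨fun z w =>
    Subtype.ext (Subalgebra.mem_center_iff.1 (qasCentre_le_center q hq3 w.2) z)⟩⟩
  have : Nontrivial (QAS k n q) := ⟨⟨_, 0, (qasBasis q hq1 hq2).ne_zero 0⟩⟩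
  open scoped IsMulCommutative in
  rw [rank_eq_card_basis (restrictedMonomialBasis q hq1 hq2 hq3)]
  simp

def topResidue (ℓ : ℕ) [NeZero ℓ] : Fin ℓ := ⟨ℓ - 1, Nat.sub_one_lt (NeZero.ne ℓ)⟩

def residueComplement (s : Fin n → Fin ℓ) : Fin n → ℕ := fun i => ℓ - 1 - s i

theorem eq_nsmul_add_topResidue_iff (a m : Fin n → ℕ) :
    a = ℓ • m + (fun _ => ℓ - 1) ↔
      (fun i => a i / ℓ) = m ∧ (fun i => Fin.ofNat ℓ (a i)) = fun _ => topResidue ℓ := by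
  conv_lhs => rw [← nsmul_div_add_residue (ℓ := ℓ) a]
  exact nsmul_add_residue_inj (s' := fun _ => topResidue ℓ)

theorem residueComplement_residue_add (a : Fin n → ℕ) :
    residueComplement (fun i => Fin.ofNat ℓ (a i)) + a
      = (ℓ • fun i => a i / ℓ) + fun _ => ℓ - 1 := by
  funext i
  have := Nat.div_add_mod (a i) ℓ
  have := Nat.mod_lt (a i) (Nat.pos_of_neZero ℓ)
  simp only [Pi.add_apply, Pi.smul_apply, smul_eq_mul, residueComplement, Fin.val_ofNat]
  omega

theorem residue_residueComplement_add_eq_top_iff (s s' : Fin n → Fin ℓ) :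
    (fun i => Fin.ofNat ℓ ((residueComplement s + fun i => (s' i : ℕ)) i))
      = (fun _ => topResidue ℓ) ↔ s' = s := by
  simp only [funext_iff, Fin.ext_iff, Fin.val_ofNat, Pi.add_apply, residueComplement, topResidue]
  refine forall_congr' fun i => ?_
  have := (s i).isLt
  have := (s' i).isLt
  rcases lt_or_ge (ℓ - 1 - s i + s' i) ℓ with h | h
  · rw [Nat.mod_eq_of_lt h]; omega
  · rw [Nat.mod_eq_sub_mod h, Nat.mod_eq_of_lt (by omega)]; omega

theorem coord_topResidue_qasMonomial (a : Fin n → ℕ) :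
    (restrictedMonomialBasis q hq1 hq2 hq3).coord (fun _ => topResidue ℓ) (qasMonomial k n q a)
      = if (fun i => Fin.ofNat ℓ (a i)) = (fun _ => topResidue ℓ)
        then ⟨_, qasMonomial_nsmul_mem_qasCentre q fun i => a i / ℓ⟩ else 0 := by
  rw [Module.Basis.coord_apply, restrictedMonomialBasis_repr_qasMonomial, Finsupp.single_apply]

theorem qasBasis_repr_coord_topResidue (x : QAS k n q) (m : Fin n → ℕ) :
    (qasBasis q hq1 hq2).repr
        ((restrictedMonomialBasis q hq1 hq2 hq3).coord (fun _ => topResidue ℓ) x) (ℓ • m)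
      = (qasBasis q hq1 hq2).repr x (ℓ • m + fun _ => ℓ - 1) := by
  have h := (qasBasis q hq1 hq2).repr_map_apply_eq_mul ((qasCentre k n ℓ q).val.toLinearMap ∘ₗ
    ((restrictedMonomialBasis q hq1 hq2 hq3).coord fun _ => topResidue ℓ).restrictScalars k)
    (i := ℓ • m + fun _ => ℓ - 1) (j := ℓ • m) (c := 1) (fun a => ?_) x
  · simpa using h
  simp only [LinearMap.comp_apply, LinearMap.restrictScalars_apply, AlgHom.toLinearMap_apply,
    Subalgebra.coe_val, qasBasis_apply, coord_topResidue_qasMonomial,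
    eq_nsmul_add_topResidue_iff a m]
  split_ifs with h₁ h₂ h₂
  · simp [h₂.1]
  · show (qasBasis q hq1 hq2).repr (qasMonomial k n q _) (ℓ • m) = 0
    rw [qasBasis_repr_qasMonomial, Finsupp.single_eq_of_ne' fun h =>
      h₂ ⟨IsAddTorsionFree.nsmul_right_injective (NeZero.ne ℓ) h, h₁⟩]
  · exact absurd h₂.2 h₁
  · simp

theorem exists_coord_topResidue_mul_left_ne_zero {x : QAS k n q} (hx : x ≠ 0) :
    ∃ r, (restrictedMonomialBasis q hq1 hq2 hq3).coord (fun _ => topResidue ℓ) (r * x) ≠ 0 := by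
  obtain ⟨a, ha⟩ := Finsupp.ne_iff.1 ((qasBasis q hq1 hq2).repr.map_ne_zero_iff.2 hx)
  refine ⟨qasMonomial k n q (residueComplement fun i => Fin.ofNat ℓ (a i)), fun h => ha ?_⟩
  have key := qasBasis_repr_coord_topResidue q hq1 hq2 hq3
    (qasMonomial k n q (residueComplement fun i => Fin.ofNat ℓ (a i)) * x) (fun i => a i / ℓ)
  rw [h, ZeroMemClass.coe_zero, map_zero, Finsupp.zero_apply, ← residueComplement_residue_add,
    qasBasis_repr_qasMonomial_mul] at key
  exact (mul_eq_zero.1 key.symm).resolve_left (qasCocycle_ne_zero q hq1 hq2 _ _)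

theorem exists_coord_topResidue_mul_right_ne_zero {x : QAS k n q} (hx : x ≠ 0) :
    ∃ r, (restrictedMonomialBasis q hq1 hq2 hq3).coord (fun _ => topResidue ℓ) (x * r) ≠ 0 := by
  obtain ⟨a, ha⟩ := Finsupp.ne_iff.1 ((qasBasis q hq1 hq2).repr.map_ne_zero_iff.2 hx)
  refine ⟨qasMonomial k n q (residueComplement fun i => Fin.ofNat ℓ (a i)), fun h => ha ?_⟩
  have key := qasBasis_repr_coord_topResidue q hq1 hq2 hq3
    (x * qasMonomial k n q (residueComplement fun i => Fin.ofNat ℓ (a i))) (fun i => a i / ℓ)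
  rw [h, ZeroMemClass.coe_zero, map_zero, Finsupp.zero_apply, ← residueComplement_residue_add,
    add_comm, qasBasis_repr_mul_qasMonomial] at key
  exact (mul_eq_zero.1 key.symm).resolve_left (qasCocycle_ne_zero q hq1 hq2 _ _)

def dualRestrictedMonomial (s : Fin n → Fin ℓ) : QAS k n q :=
  (qasCocycle q (residueComplement s) fun i => (s i : ℕ))⁻¹ •
    qasMonomial k n q (residueComplement s)

theorem coord_topResidue_dualRestrictedMonomial_mul (s s' : Fin n → Fin ℓ) :
    (restrictedMonomialBasis q hq1 hq2 hq3).coord (fun _ => topResidue ℓ)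
        (dualRestrictedMonomial q s * restrictedMonomialBasis q hq1 hq2 hq3 s')
      = if s = s' then 1 else 0 := by
  rw [dualRestrictedMonomial, restrictedMonomialBasis_apply, smul_mul_assoc,
    qasMonomial_mul q hq1 hq2, smul_smul, LinearMap.map_smul_of_tower,
    coord_topResidue_qasMonomial]
  simp only [residue_residueComplement_add_eq_top_iff]
  split_ifs with h₁ h₂ h₂
  · subst s'
    have h0 : (fun i => (residueComplement s + fun i => (s i : ℕ)) i / ℓ) = 0 :=
      funext fun i => Nat.div_eq_of_lt <| by
        simp only [Pi.add_apply, residueComplement]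
        have := (s i).isLt
        omega
    rw [inv_mul_cancel₀ (qasCocycle_ne_zero q hq1 hq2 _ _), one_smul]
    exact Subtype.ext (by simp only [h0, smul_zero, qasMonomial_zero]; rfl)
  · exact absurd h₁.symm h₂
  · exact absurd h₂.symm h₁
  · exact smul_zero _

theorem isFrobeniusForm_coord_topResidue :
    IsFrobeniusForm (qasCentre k n ℓ q)
      ((restrictedMonomialBasis q hq1 hq2 hq3).coord fun _ => topResidue ℓ) := by
  have : SMulCommClass (qasCentre k n ℓ q) (QAS k n q) (QAS k n q) :=
    ⟨fun z x y => by
      simp only [Subalgebra.smul_def, smul_eq_mul, ← mul_assoc,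
        Subalgebra.mem_center_iff.1 (qasCentre_le_center q hq3 z.2) x]⟩
  exact isFrobeniusForm_of_nondegenerate
    (fun _ hx => exists_coord_topResidue_mul_left_ne_zero q hq1 hq2 hq3 hx)
    (fun _ hx => exists_coord_topResidue_mul_right_ne_zero q hq1 hq2 hq3 hx)
    (exists_forall_eq_mul_of_dualBasis _ _ _
      (coord_topResidue_dualRestrictedMonomial_mul q hq1 hq2 hq3))

variable {G : Type*} [CommGroup G]

theorem qasGrading_eq_span (d : Fin n → G) (g : G) :
    qasGrading k n q d g
      = Submodule.span k (qasBasis q hq1 hq2 '' ((fun a => ∏ i, d i ^ a i) ⁻¹' {g})) := by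
  rw [qasGrading]
  congr 1
  ext x
  simp only [Set.mem_image, Set.mem_preimage, Set.mem_singleton_iff, qasBasis_apply]
  exact exists_congr fun a => by rw [and_comm, eq_comm (a := x)]

theorem isInternal_qasGrading [DecidableEq G] (hq1 : ∀ i, q i i = 1)
    (hq2 : ∀ i j, i ≠ j → q i j * q j i = 1) (d : Fin n → G) :
    DirectSum.IsInternal (qasGrading k n q d) := by
  convert (qasBasis q hq1 hq2).isInternal_span_image_fiber (fun a => ∏ i, d i ^ a i) using 1
  exact funext (qasGrading_eq_span q hq1 hq2 d)

theorem qasMonomial_mem_qasGrading (d : Fin n → G) (a : Fin n → ℕ) :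
    qasMonomial k n q a ∈ qasGrading k n q d (∏ i, d i ^ a i) :=
  Submodule.subset_span ⟨a, rfl, rfl⟩

theorem coord_topResidue_mem_qasGrading (d : Fin n → G) {g : G} {x : QAS k n q}
    (hx : x ∈ qasGrading k n q d g) :
    ((restrictedMonomialBasis q hq1 hq2 hq3).coord (fun _ => topResidue ℓ) x : QAS k n q)
      ∈ qasGrading k n q d ((∏ i, d i ^ (ℓ - 1))⁻¹ * g) := by
  induction hx using Submodule.span_induction with
  | mem y hy =>
    obtain ⟨a, rfl, rfl⟩ := hy
    rw [coord_topResidue_qasMonomial]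
    split_ifs with h
    · have ha := (eq_nsmul_add_topResidue_iff a _).2 ⟨rfl, h⟩
      generalize (fun i => a i / ℓ) = m at ha ⊢
      convert qasMonomial_mem_qasGrading q d (ℓ • m) using 2
      rw [ha]
      simp only [Pi.add_apply, pow_add, Finset.prod_mul_distrib]
      rw [mul_comm, mul_inv_cancel_right]
    · exact Submodule.zero_mem _
  | zero => simp
  | add x y _ _ hx hy => simpa using Submodule.add_mem _ hx hy
  | smul r x _ hx =>
    rw [LinearMap.map_smul_of_tower]
    exact Submodule.smul_mem _ r hx

end QuantumAffineSpace

/-- Quantum affine space at an `ℓ`-th root of unity is a free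
Frobenius extension of its `ℓ`-centre of rank `ℓⁿ`, with Frobenius form the projection
onto the top restricted monomial; and for every grading by an abelian group `G` with
`xᵢ` of degree `dᵢ` it is a free-graded Frobenius extension with homogeneous Frobenius
form of degree `(∏ dᵢ^{ℓ-1})⁻¹`. -/
theorem quantumAffineSpace_freeGradedFrobenius
    (hℓ : 0 < ℓ)
    (hq1 : ∀ i, q i i = 1)
    (hq2 : ∀ i j, i ≠ j → q i j * q j i = 1)
    (hq3 : ∀ i j, q i j ^ ℓ = 1) :
    ∃ b : Module.Basis (Fin n → Fin ℓ) (qasCentre k n ℓ q) (QAS k n q),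
      (∀ a : Fin n → Fin ℓ, b a = qasMonomial k n q fun i => (a i : ℕ)) ∧
      (Module.rank (qasCentre k n ℓ q) (QAS k n q) = ((ℓ ^ n : ℕ) : Cardinal)) ∧
      IsFrobeniusForm (qasCentre k n ℓ q)
        (b.coord fun _ => (⟨ℓ - 1, by omega⟩ : Fin ℓ)) ∧
      (∀ (G : Type) (_ : CommGroup G) (_ : DecidableEq G) (d : Fin n → G),
        DirectSum.IsInternal (qasGrading k n q d) ∧
        (∀ a : Fin n → Fin ℓ,
          b a ∈ qasGrading k n q d (∏ i, d i ^ (a i : ℕ))) ∧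
        (∀ (g : G) (x : QAS k n q), x ∈ qasGrading k n q d g →
          ((b.coord fun _ => (⟨ℓ - 1, by omega⟩ : Fin ℓ)) x : QAS k n q) ∈
            qasGrading k n q d ((∏ i, d i ^ (ℓ - 1))⁻¹ * g))) := by
  have : NeZero ℓ := ⟨hℓ.ne'⟩
  refine ⟨restrictedMonomialBasis q hq1 hq2 hq3, restrictedMonomialBasis_apply q hq1 hq2 hq3,
    rank_qasCentre q hq1 hq2 hq3, isFrobeniusForm_coord_topResidue q hq1 hq2 hq3,
    fun G _ _ d => ⟨isInternal_qasGrading q hq1 hq2 d, fun a => ?_,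
      fun g x hx => coord_topResidue_mem_qasGrading q hq1 hq2 hq3 d hx⟩⟩
  rw [restrictedMonomialBasis_apply]
  exact qasMonomial_mem_qasGrading q d _
end
end

section
/- Let R be a non-negatively G-filtered k-algebra, M a finite free-filtered R-module, and set gr R and gr M for the associated graded objects. Then: (1) Hom_{gr R}(gr M, gr R) is naturally G-graded, with component of degree g consisting of those morphisms sending (gr M)^h into (gr R)^{gh} for all h; and (2) there is an isomorphism of graded gr R-modules gr Hom_R(M,R) ≅ Hom_{gr R}(gr M, gr R), where Hom_R(M,R) carries the filtration Hom_R(M,R)_g := {φ : φ(M_h) ⊆ R_{gh} for all h ∈ G}. -/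
/-!
STATEMENT 15: Let `R` be a non-negatively `G`-filtered `k`-algebra and `M` a finite
free-filtered `R`-module. Then (1) `Hom_{gr R}(gr M, gr R)` is naturally `G`-graded,
with component of degree `g` consisting of the morphisms sending `(gr M)^h` into
`(gr R)^{gh}` for all `h`; and (2) `gr Hom_R(M,R) ≅ Hom_{gr R}(gr M, gr R)` as graded
`gr R`-modules, where `Hom_R(M,R)` carries the filtration
`Hom_R(M,R)_g = {φ : φ(M_h) ⊆ R_{gh} for all h}`.

The associated graded objects are specified by realisations `(A, 𝒜, σ)` of `gr R` and
`(N, 𝒩, τ)` of `gr M`; part (2) is expressed by degreewise symbol maps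
`Θ_g : Hom_R(M,R)_g → Hom_{gr R}(gr M, gr R)^g` which are compatible with `σ, τ`,
surjective, and have kernel `Σ_{h<g} Hom_R(M,R)_h` — i.e. they induce an isomorphism
of graded modules `gr Hom_R(M,R) ≅ Hom_{gr R}(gr M, gr R)`.
-/


set_option maxHeartbeats 1000000
set_option synthInstance.maxHeartbeats 400000

noncomputable section

variable {k G : Type*} [Field k] [CommGroup G] [LinearOrder G] [IsOrderedMonoid G]

/-- A `G`-filtration of a `k`-algebra. -/
structure IsAlgebraFiltration {R : Type*} [Ring R] [Algebra k R]
    (F : G → Submodule k R) : Prop where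
  mono : Monotone F
  kfinite : ∀ g, Module.Finite k (F g)
  discrete : ∃ g, F g = ⊥
  exhaustive : ∀ x : R, ∃ g, x ∈ F g
  proper : ∀ g, F g ≠ ⊤
  one_mem : (1 : R) ∈ F (1 : G)
  mul_mem : ∀ {g h : G} {a b : R}, a ∈ F g → b ∈ F h → a * b ∈ F (g * h)

/-- A compatible `G`-filtration of an `R`-module. -/
structure IsModuleFiltration' {R M : Type*} [Ring R] [Algebra k R]
    [AddCommGroup M] [Module R M] [Module k M] [IsScalarTower k R M]
    (F : G → Submodule k R) (FM : G → Submodule k M) : Prop where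
  mono : Monotone FM
  kfinite : ∀ g, Module.Finite k (FM g)
  discrete : ∃ g, FM g = ⊥
  exhaustive : ∀ x : M, ∃ g, x ∈ FM g
  proper : ∀ g, FM g ≠ ⊤
  smul_mem : ∀ {g h : G} {a : R} {x : M}, a ∈ F g → x ∈ FM h → a • x ∈ FM (g * h)

/-- A `G`-grading of a `k`-algebra. -/
structure IsAlgebraGrading {A : Type*} [Ring A] [Algebra k A]
    (𝒜 : G → Submodule k A) : Prop where
  internal : DirectSum.IsInternal 𝒜
  kfinite : ∀ g, Module.Finite k (𝒜 g)
  nonneg : ∀ g < (1 : G), 𝒜 g = ⊥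
  proper : ∀ g, 𝒜 g ≠ ⊤
  one_mem : (1 : A) ∈ 𝒜 (1 : G)
  mul_mem : ∀ {g h : G} {a b : A}, a ∈ 𝒜 g → b ∈ 𝒜 h → a * b ∈ 𝒜 (g * h)

/-- A compatible `G`-grading of a module over a `G`-graded algebra. -/
structure IsModuleGrading {A N : Type*} [Ring A] [Algebra k A]
    [AddCommGroup N] [Module A N] [Module k N] [IsScalarTower k A N]
    (𝒜 : G → Submodule k A) (𝒩 : G → Submodule k N) : Prop where
  internal : DirectSum.IsInternal 𝒩
  kfinite : ∀ g, Module.Finite k (𝒩 g)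
  proper : ∀ g, 𝒩 g ≠ ⊤
  smul_mem : ∀ {g h : G} {a : A} {x : N}, a ∈ 𝒜 g → x ∈ 𝒩 h → a • x ∈ 𝒩 (g * h)

/-- A realisation of `(A, 𝒜)` as the associated graded algebra of `(R, F)`. -/
structure GradedRealization {R : Type*} [Ring R] [Algebra k R]
    (F : G → Submodule k R)
    (A : Type*) [Ring A] [Algebra k A] (𝒜 : G → Submodule k A) where
  σ : ∀ g : G, F g →ₗ[k] A
  mem_piece : ∀ (g : G) (x : F g), σ g x ∈ 𝒜 g
  surj : ∀ g : G, ∀ a ∈ 𝒜 g, ∃ x : F g, σ g x = a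
  ker : ∀ (g : G) (x : F g), σ g x = 0 ↔ (x : R) ∈ ⨆ (h : G) (_ : h < g), F h
  map_one : ∀ h1 : (1 : R) ∈ F 1, σ 1 ⟨1, h1⟩ = 1
  map_mul : ∀ (g h : G) (x : F g) (y : F h) (hxy : (x : R) * (y : R) ∈ F (g * h)),
    σ (g * h) ⟨(x : R) * (y : R), hxy⟩ = σ g x * σ h y

/-- A realisation of `(N, 𝒩)` as the associated graded module of `(M, FM)`, over a
realisation `ρ` of the associated graded algebra of `(R, F)`. -/
structure GradedModuleRealization {R M : Type*} [Ring R] [Algebra k R]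
    [AddCommGroup M] [Module R M] [Module k M] [IsScalarTower k R M]
    (F : G → Submodule k R) (FM : G → Submodule k M)
    {A : Type*} [Ring A] [Algebra k A] {𝒜 : G → Submodule k A}
    (ρ : GradedRealization F A 𝒜)
    (N : Type*) [AddCommGroup N] [Module A N] [Module k N] [IsScalarTower k A N]
    (𝒩 : G → Submodule k N) where
  τ : ∀ g : G, FM g →ₗ[k] N
  mem_piece : ∀ (g : G) (x : FM g), τ g x ∈ 𝒩 g
  surj : ∀ g : G, ∀ a ∈ 𝒩 g, ∃ x : FM g, τ g x = a
  ker : ∀ (g : G) (x : FM g), τ g x = 0 ↔ (x : M) ∈ ⨆ (h : G) (_ : h < g), FM h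
  map_smul : ∀ (g h : G) (a : F g) (x : FM h) (hax : (a : R) • (x : M) ∈ FM (g * h)),
    τ (g * h) ⟨(a : R) • (x : M), hax⟩ = ρ.σ g a • τ h x

/-- Scalar multiplication by a fixed `m : M`, as a `k`-linear map `R → M`. -/
def smulBy {R M : Type*} [Ring R] [Algebra k R] [AddCommGroup M] [Module R M]
    [Module k M] [IsScalarTower k R M] (m : M) : R →ₗ[k] M where
  toFun r := r • m
  map_add' a b := add_smul a b m
  map_smul' c a := smul_assoc c a m

/-- `(b, d)` is a free-filtered basis of `(M, FM)`. -/
def IsFreeFilteredBasis {R M : Type*} [Ring R] [Algebra k R] [AddCommGroup M]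
    [Module R M] [Module k M] [IsScalarTower k R M]
    (F : G → Submodule k R) (FM : G → Submodule k M)
    {n : ℕ} (b : Module.Basis (Fin n) R M) (d : Fin n → G) : Prop :=
  ∀ g : G, FM g = ⨆ i, (F (g * (d i)⁻¹)).map (smulBy (b i))

/-- The natural filtration on `Hom_R(M,R)`. -/
def HomFilt {R M : Type*} [Ring R] [Algebra k R] [AddCommGroup M] [Module R M]
    [Module k M] [IsScalarTower k R M]
    (F : G → Submodule k R) (FM : G → Submodule k M) (g : G) :
    Submodule k (M →ₗ[R] R) where
  carrier := {f | ∀ (h : G) (x : M), x ∈ FM h → f x ∈ F (g * h)}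
  add_mem' := fun h₁ h₂ h x hx => (F _).add_mem (h₁ h x hx) (h₂ h x hx)
  zero_mem' := fun h x hx => by simpa using (F _).zero_mem
  smul_mem' := fun c f hf h x hx => (F _).smul_mem c (hf h x hx)

/-- The natural grading on `Hom_{gr R}(gr M, gr R)`: the piece of degree `g` consists
of the maps sending `𝒩 h` into `𝒜 (g*h)` for all `h`. -/
def HomGr {A N : Type*} [Ring A] [Algebra k A] [AddCommGroup N] [Module A N]
    [Module k N] [IsScalarTower k A N]
    (𝒜 : G → Submodule k A) (𝒩 : G → Submodule k N) (g : G) :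
    Submodule k (N →ₗ[A] A) where
  carrier := {f | ∀ (h : G) (x : N), x ∈ 𝒩 h → f x ∈ 𝒜 (g * h)}
  add_mem' := fun h₁ h₂ h x hx => (𝒜 _).add_mem (h₁ h x hx) (h₂ h x hx)
  zero_mem' := fun h x hx => by simpa using (𝒜 _).zero_mem
  smul_mem' := fun c f hf h x hx => (𝒜 _).smul_mem c (hf h x hx)

/-!
The symbols `e i = τ (b i)` of a free-filtered basis form a homogeneous `gr R`-basis of `gr M`.
They span because `τ` is onto every graded piece. For independence it suffices, by the
grading, to treat a homogeneous relation `∑ σ (r i) • e i = 0` of degree `c`: it says that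
`∑ r i • b i` lies in some `FM h` with `h < c`, hence each `r i` lies in `F (h * (d i)⁻¹)`,
one step below its degree, and `σ (r i) = 0`.

In the coordinates given by `b` and by `e`, `Hom_R(M,R)_g` and `Hom_{gr R}(gr M, gr R)^g`
become the boxes `∏ i, F (g * d i)` and `∏ i, 𝒜 (g * d i)`. The second family inherits its
grading from `𝒜`, and `Θ_g` is `σ` applied coordinatewise, so its image and kernel are read
off from those of `σ`.
-/

theorem mem_iSup_lt_iff_of_monotone {ι S X : Type*} [LinearOrder ι] [NoMinOrder ι] [Semiring S]
    [AddCommMonoid X] [Module S X] {P : ι → Submodule S X} (hP : Monotone P) {g : ι} {x : X} :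
    x ∈ ⨆ (h) (_ : h < g), P h ↔ ∃ h < g, x ∈ P h := by
  refine ⟨fun hx => ?_, fun ⟨h, hh, hx⟩ =>
    Submodule.mem_iSup_of_mem h (Submodule.mem_iSup_of_mem hh hx)⟩
  rw [iSup_subtype'] at hx
  have : Nonempty {h // h < g} := let ⟨h, hh⟩ := exists_lt g; ⟨⟨h, hh⟩⟩
  obtain ⟨⟨h, hh⟩, hx⟩ :=
    (Submodule.mem_iSup_of_directed _ (hP.comp (Subtype.mono_coe _)).directed_le).1 hx
  exact ⟨h, hh, hx⟩

theorem LinearMap.injective_of_homogeneous_injective {ι S X Y : Type*} [Ring S]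
    [AddCommGroup X] [Module S X] [AddCommGroup Y] [Module S Y]
    {𝒳 : ι → Submodule S X} {𝒴 : ι → Submodule S Y} (h𝒳 : iSup 𝒳 = ⊤)
    (h𝒴 : iSupIndep 𝒴) (f : X →ₗ[S] Y) (hf : ∀ i, 𝒳 i ≤ (𝒴 i).comap f)
    (hinj : ∀ i, ∀ x ∈ 𝒳 i, f x = 0 → x = 0) : Function.Injective f := by
  rw [← LinearMap.ker_eq_bot, eq_bot_iff]
  intro x hx
  obtain ⟨v, hv, rfl⟩ :=
    (Submodule.mem_iSup_iff_exists_finsupp _ _).1 (h𝒳 ▸ Submodule.mem_top : x ∈ iSup 𝒳)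
  have hfv : ∀ i ∈ v.support, f (v i) = 0 :=
    (iSupIndep_iff_finsetSum_eq_zero_imp_eq_zero 𝒴).1 h𝒴 v.support (fun i => f (v i))
      (fun i _ => hf i (hv i)) (by simpa [Finsupp.sum, map_sum] using hx)
  rw [Submodule.mem_bot, Finsupp.sum]
  exact Finset.sum_eq_zero fun i hi => hinj i _ (hv i) (hfv i hi)

theorem DirectSum.IsInternal.comap_linearEquiv {ι S V W : Type*} [DecidableEq ι] [Ring S]
    [AddCommGroup V] [Module S V] [AddCommGroup W] [Module S W] {P : ι → Submodule S V}
    (h : DirectSum.IsInternal P) (e : W ≃ₗ[S] V) :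
    DirectSum.IsInternal fun i => (P i).comap (e : W →ₗ[S] V) := by
  rw [DirectSum.isInternal_submodule_iff_iSupIndep_and_iSup_eq_top] at h ⊢
  have hmap :
      (fun i => (P i).comap (e : W →ₗ[S] V)) = Submodule.orderIsoMapComap e.symm ∘ P :=
    funext fun i => (Submodule.map_equiv_eq_comap_symm e.symm (P i)).symm
  rw [hmap, iSupIndep_map_orderIso_iff]
  refine ⟨h.1, ?_⟩
  simp [Function.comp_def, ← Submodule.map_iSup, h.2]

theorem DirectSum.IsInternal.pi_shift {Γ ι S X : Type*} [Group Γ] [DecidableEq Γ] [Fintype ι]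
    [DecidableEq ι] [Ring S] [AddCommGroup X] [Module S X] {𝒳 : Γ → Submodule S X}
    (h : DirectSum.IsInternal 𝒳) (s : ι → Γ) :
    DirectSum.IsInternal fun g => Submodule.pi Set.univ fun i => 𝒳 (g * s i) := by
  rw [DirectSum.isInternal_submodule_iff_iSupIndep_and_iSup_eq_top] at h ⊢
  refine ⟨iSupIndep_def.2 fun g => Submodule.disjoint_def.2 fun a ha hrest => funext fun i => ?_,
    ?_⟩
  · have hle : ⨆ (j) (_ : j ≠ g), Submodule.pi Set.univ (fun i => 𝒳 (j * s i)) ≤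
        (⨆ (m) (_ : m ≠ g * s i), 𝒳 m).comap (LinearMap.proj i) :=
      iSup₂_le fun j hj _ hy => Submodule.mem_iSup_of_mem (j * s i)
        (Submodule.mem_iSup_of_mem (mul_left_injective (s i) |>.ne hj) (hy i trivial))
    exact Submodule.disjoint_def.1 (iSupIndep_def.1 h.1 (g * s i)) _ (ha i trivial) (hle hrest)
  · refine eq_top_iff.2 fun a _ => ?_
    rw [← Finset.univ_sum_single a]
    refine Submodule.sum_mem _ fun i _ => ?_
    refine Submodule.iSup_induction 𝒳 (motive := fun y =>
        Pi.single (M := fun _ => X) i y ∈ ⨆ g, Submodule.pi Set.univ fun i => 𝒳 (g * s i))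
      (h.2 ▸ Submodule.mem_top : a i ∈ iSup 𝒳) (fun m y hy => ?_) (by simp)
      (fun y z hy hz => by simpa [Pi.single_add] using add_mem hy hz)
    refine Submodule.mem_iSup_of_mem (m * (s i)⁻¹) (Submodule.mem_pi.2 fun j _ => ?_)
    rcases eq_or_ne j i with rfl | hj
    · simpa using hy
    · simp [hj]

theorem IsAlgebraFiltration.nontrivial {R : Type*} [Ring R] [Algebra k R]
    {F : G → Submodule k R} (hF : IsAlgebraFiltration F) : Nontrivial G := by
  by_contra hG
  rw [not_nontrivial_iff_subsingleton] at hG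
  refine hF.proper 1 (eq_top_iff.2 fun x _ => ?_)
  obtain ⟨g, hg⟩ := hF.exhaustive x
  rwa [Subsingleton.elim g 1] at hg

theorem homFilt_mono {R M : Type*} [Ring R] [Algebra k R] [AddCommGroup M] [Module R M]
    [Module k M] [IsScalarTower k R M] {F : G → Submodule k R} (hF : Monotone F)
    (FM : G → Submodule k M) : Monotone (HomFilt F FM) :=
  fun _ _ hg _ hφ h x hx => hF (mul_le_mul_left hg h) (hφ h x hx)

namespace IsFreeFilteredBasis

variable {R M : Type*} [Ring R] [Algebra k R] [AddCommGroup M] [Module R M] [Module k M]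
  [IsScalarTower k R M] {F : G → Submodule k R} {FM : G → Submodule k M}
  {n : ℕ} {b : Module.Basis (Fin n) R M} {d : Fin n → G}

theorem smul_mem (hb : IsFreeFilteredBasis F FM b d) {g : G} {i : Fin n} {r : R}
    (hr : r ∈ F (g * (d i)⁻¹)) : r • b i ∈ FM g := by
  rw [hb]
  exact Submodule.mem_iSup_of_mem i ⟨r, hr, rfl⟩

theorem mem_iff (hb : IsFreeFilteredBasis F FM b d) {g : G} {x : M} :
    x ∈ FM g ↔ ∀ i, b.repr x i ∈ F (g * (d i)⁻¹) := by
  refine ⟨fun hx => ?_, fun hx =>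
    b.sum_repr x ▸ Submodule.sum_mem _ fun i _ => hb.smul_mem (hx i)⟩
  rw [hb] at hx
  refine Submodule.iSup_induction _ (motive := fun x => ∀ i, b.repr x i ∈ F (g * (d i)⁻¹)) hx
    ?_ (by simp) fun x y hx hy i => by simpa using add_mem (hx i) (hy i)
  rintro j _ ⟨r, hr, rfl⟩ i
  rcases eq_or_ne j i with rfl | hji
  · simpa [smulBy] using hr
  · simp [smulBy, hji]

theorem basis_mem (hb : IsFreeFilteredBasis F FM b d) (h1 : (1 : R) ∈ F 1) (i : Fin n) :
    b i ∈ FM (d i) := by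
  simpa using hb.smul_mem (g := d i) (i := i) (r := 1) (by rwa [mul_inv_cancel])

theorem mem_homFilt_iff (hb : IsFreeFilteredBasis F FM b d) (h1 : (1 : R) ∈ F 1)
    (hmul : ∀ {g h : G} {a c : R}, a ∈ F g → c ∈ F h → a * c ∈ F (g * h))
    {g : G} {φ : M →ₗ[R] R} : φ ∈ HomFilt F FM g ↔ ∀ i, φ (b i) ∈ F (g * d i) := by
  refine ⟨fun hφ i => hφ _ _ (hb.basis_mem h1 i), fun hφ h x hx => ?_⟩
  rw [← b.sum_repr x, map_sum]
  refine Submodule.sum_mem _ fun i _ => ?_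
  rw [map_smul, smul_eq_mul]
  have hdeg : h * (d i)⁻¹ * (g * d i) = g * h := by
    rw [← div_eq_mul_inv, div_mul_mul_cancel, mul_comm]
  simpa [hdeg] using hmul (hb.mem_iff.1 hx i) (hφ i)

theorem homFilt_eq_comap (hb : IsFreeFilteredBasis F FM b d) (h1 : (1 : R) ∈ F 1)
    (hmul : ∀ {g h : G} {a c : R}, a ∈ F g → c ∈ F h → a * c ∈ F (g * h)) (g : G) :
    HomFilt F FM g = (Submodule.pi Set.univ fun i => F (g * d i)).comap
      (b.constr (M' := R) k).symm.toLinearMap := by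
  ext φ
  simp [hb.mem_homFilt_iff h1 hmul]

theorem mem_iSup_homFilt_lt_iff (hb : IsFreeFilteredBasis F FM b d)
    (hF : IsAlgebraFiltration F) {g : G} {φ : M →ₗ[R] R} :
    φ ∈ ⨆ (h) (_ : h < g), HomFilt F FM h ↔
      ∀ i, φ (b i) ∈ ⨆ (c) (_ : c < g * d i), F c := by
  have := hF.nontrivial
  have hφ := fun h => hb.mem_homFilt_iff hF.one_mem hF.mul_mem (g := h) (φ := φ)
  simp only [mem_iSup_lt_iff_of_monotone (homFilt_mono hF.mono FM),
    mem_iSup_lt_iff_of_monotone hF.mono]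
  constructor
  · rintro ⟨h, hh, hφh⟩ i
    exact ⟨h * d i, mul_lt_mul_left hh _, (hφ h).1 hφh i⟩
  · intro hc
    choose c hc hφc using hc
    have : Nonempty (Set.Iio g) := let ⟨h, hh⟩ := exists_lt g; ⟨⟨h, hh⟩⟩
    obtain ⟨⟨h, hh⟩, hle⟩ :=
      Finite.exists_le fun i => (⟨c i * (d i)⁻¹, mul_inv_lt_iff_lt_mul.2 (hc i)⟩ : Set.Iio g)
    exact ⟨h, hh, (hφ h).2 fun i => hF.mono (mul_inv_le_iff_le_mul.1 (hle i)) (hφc i)⟩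

theorem isInternal_homFilt (hb : IsFreeFilteredBasis F FM b d) (hF : DirectSum.IsInternal F)
    (h1 : (1 : R) ∈ F 1)
    (hmul : ∀ {g h : G} {a c : R}, a ∈ F g → c ∈ F h → a * c ∈ F (g * h)) :
    DirectSum.IsInternal (HomFilt F FM) := by
  rw [funext (hb.homFilt_eq_comap h1 hmul)]
  exact (hF.pi_shift d).comap_linearEquiv _

end IsFreeFilteredBasis

namespace GradedRealization

variable {R A : Type*} [Ring R] [Algebra k R] [Ring A] [Algebra k A]
  {F : G → Submodule k R} {𝒜 : G → Submodule k A} (ρ : GradedRealization F A 𝒜)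

theorem σ_mul_of_eq {g₁ g₂ g : G} (hg : g₁ * g₂ = g) (x : F g₁) (y : F g₂)
    (hxy : (x : R) * y ∈ F g) : ρ.σ g ⟨x * y, hxy⟩ = ρ.σ g₁ x * ρ.σ g₂ y := by
  subst hg
  exact ρ.map_mul _ _ x y hxy

variable {M : Type*} [AddCommGroup M] [Module R M] [Module k M] [IsScalarTower k R M]
  {FM : G → Submodule k M} {n : ℕ} {b : Module.Basis (Fin n) R M} {d : Fin n → G}

def symbolValues (hbd : ∀ i, b i ∈ FM (d i)) (g : G) :
    HomFilt F FM g →ₗ[k] (Fin n → A) where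
  toFun φ i := ρ.σ (g * d i) ⟨φ.1 (b i), φ.2 _ _ (hbd i)⟩
  map_add' _ _ := funext fun _ => map_add (ρ.σ _) ⟨_, _⟩ ⟨_, _⟩
  map_smul' c _ := funext fun _ => map_smul (ρ.σ _) c ⟨_, _⟩

theorem range_symbolValues (hF : IsAlgebraFiltration F) (hb : IsFreeFilteredBasis F FM b d)
    (hbd : ∀ i, b i ∈ FM (d i)) (g : G) :
    LinearMap.range (ρ.symbolValues hbd g) = Submodule.pi Set.univ fun i => 𝒜 (g * d i) := by
  refine le_antisymm ?_ fun a ha => ?_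
  · rintro _ ⟨φ, rfl⟩
    exact Submodule.mem_pi.2 fun i _ => ρ.mem_piece _ _
  · choose r hr using fun i => ρ.surj _ (a i) (ha i trivial)
    have hφ : b.constr k (fun i => (r i : R)) ∈ HomFilt F FM g :=
      (hb.mem_homFilt_iff hF.one_mem hF.mul_mem).2 fun i => by simp
    refine ⟨⟨_, hφ⟩, funext fun i => ?_⟩
    rw [← hr i]
    exact congrArg (ρ.σ _) (Subtype.ext (b.constr_basis k _ i))

theorem symbolValues_eq_zero_iff (hF : IsAlgebraFiltration F) (hb : IsFreeFilteredBasis F FM b d)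
    (hbd : ∀ i, b i ∈ FM (d i)) {g : G} (φ : HomFilt F FM g) :
    ρ.symbolValues hbd g φ = 0 ↔ φ.1 ∈ ⨆ (h) (_ : h < g), HomFilt F FM h := by
  rw [hb.mem_iSup_homFilt_lt_iff hF, funext_iff]
  exact forall_congr' fun i => ρ.ker _ _

end GradedRealization

theorem homGr_eq_homFilt {A N : Type*} [Ring A] [Algebra k A] [AddCommGroup N] [Module A N]
    [Module k N] [IsScalarTower k A N] (𝒜 : G → Submodule k A) (𝒩 : G → Submodule k N) :
    HomGr 𝒜 𝒩 = HomFilt 𝒜 𝒩 :=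
  rfl

namespace GradedModuleRealization

variable {R M A N : Type*} [Ring R] [Algebra k R]
  [AddCommGroup M] [Module R M] [Module k M] [IsScalarTower k R M] [Ring A] [Algebra k A]
  [AddCommGroup N] [Module A N] [Module k N] [IsScalarTower k A N]
  {F : G → Submodule k R} {FM : G → Submodule k M} {𝒜 : G → Submodule k A}
  {𝒩 : G → Submodule k N} {ρ : GradedRealization F A 𝒜}
  (μ : GradedModuleRealization F FM ρ N 𝒩)
  {n : ℕ} {b : Module.Basis (Fin n) R M} {d : Fin n → G}

theorem τ_smul_of_eq {g₁ g₂ g : G} (hg : g₁ * g₂ = g) (a : F g₁) (x : FM g₂)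
    (hax : (a : R) • (x : M) ∈ FM g) :
    μ.τ g ⟨a • x, hax⟩ = ρ.σ g₁ a • μ.τ g₂ x := by
  subst hg
  exact μ.map_smul _ _ a x hax

def symbol (hbd : ∀ i, b i ∈ FM (d i)) (i : Fin n) : N :=
  μ.τ (d i) ⟨b i, hbd i⟩

theorem symbol_mem (hbd : ∀ i, b i ∈ FM (d i)) (i : Fin n) : μ.symbol hbd i ∈ 𝒩 (d i) :=
  μ.mem_piece _ _

theorem τ_sum_smul (hb : IsFreeFilteredBasis F FM b d) (hbd : ∀ i, b i ∈ FM (d i)) {g : G}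
    {r : Fin n → R} (hr : ∀ i, r i ∈ F (g * (d i)⁻¹)) (hx : ∑ i, r i • b i ∈ FM g) :
    μ.τ g ⟨∑ i, r i • b i, hx⟩ = ∑ i, ρ.σ _ ⟨r i, hr i⟩ • μ.symbol hbd i := by
  rw [show (⟨∑ i, r i • b i, hx⟩ : FM g) = ∑ i, ⟨r i • b i, hb.smul_mem (hr i)⟩ from
    Subtype.ext (by simp), map_sum]
  exact Finset.sum_congr rfl fun i _ =>
    μ.τ_smul_of_eq (inv_mul_cancel_right g (d i)) ⟨r i, hr i⟩ ⟨b i, hbd i⟩ _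

theorem τ_eq_sum (hb : IsFreeFilteredBasis F FM b d) (hbd : ∀ i, b i ∈ FM (d i)) {g : G}
    (x : FM g) :
    μ.τ g x = ∑ i, ρ.σ _ ⟨b.repr x i, hb.mem_iff.1 x.2 i⟩ • μ.symbol hbd i := by
  have hx : ∑ i, b.repr x i • b i ∈ FM g := (b.sum_repr x).symm ▸ x.2
  rw [← μ.τ_sum_smul hb hbd _ hx]
  exact congrArg (μ.τ g) (Subtype.ext (b.sum_repr x).symm)

theorem le_iSup_map_smul_symbol (hb : IsFreeFilteredBasis F FM b d)
    (hbd : ∀ i, b i ∈ FM (d i)) (g : G) :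
    𝒩 g ≤ ⨆ i, (𝒜 (g * (d i)⁻¹)).map (smulBy (μ.symbol hbd i)) := by
  intro y hy
  obtain ⟨x, rfl⟩ := μ.surj g y hy
  rw [μ.τ_eq_sum hb hbd]
  exact Submodule.sum_mem _ fun i _ => Submodule.mem_iSup_of_mem i ⟨_, ρ.mem_piece _ _, rfl⟩

theorem span_symbol (hb : IsFreeFilteredBasis F FM b d) (hbd : ∀ i, b i ∈ FM (d i))
    (h𝒩 : IsModuleGrading 𝒜 𝒩) : ⊤ ≤ Submodule.span A (Set.range (μ.symbol hbd)) := by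
  rintro y -
  have hle :
      ⨆ g, 𝒩 g ≤ (Submodule.span A (Set.range (μ.symbol hbd))).restrictScalars k := by
    refine iSup_le fun g => (μ.le_iSup_map_smul_symbol hb hbd g).trans (iSup_le fun i => ?_)
    rintro _ ⟨a, -, rfl⟩
    exact Submodule.smul_mem _ a (Submodule.subset_span ⟨i, rfl⟩)
  exact hle (h𝒩.internal.submodule_iSup_eq_top ▸ Submodule.mem_top)

theorem eq_zero_of_sum_smul_symbol_eq_zero (hF : IsAlgebraFiltration F)
    (hFM : IsModuleFiltration' F FM) (hb : IsFreeFilteredBasis F FM b d)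
    (hbd : ∀ i, b i ∈ FM (d i)) {c : G} {a : Fin n → A}
    (ha : ∀ i, a i ∈ 𝒜 (c * (d i)⁻¹))
    (h0 : ∑ i, a i • μ.symbol hbd i = 0) : a = 0 := by
  have := hF.nontrivial
  choose r hr using fun i => ρ.surj _ (a i) (ha i)
  have hx : ∑ i, (r i : R) • b i ∈ FM c := Submodule.sum_mem _ fun i _ => hb.smul_mem (r i).2
  have hτ : μ.τ c ⟨_, hx⟩ = 0 := by
    rw [μ.τ_sum_smul hb hbd fun i => (r i).2]
    simpa only [hr] using h0
  obtain ⟨h, hhc, hxh⟩ := (mem_iSup_lt_iff_of_monotone hFM.mono).1 ((μ.ker _ _).1 hτ)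
  funext i
  rw [Pi.zero_apply, ← hr i, ρ.ker, mem_iSup_lt_iff_of_monotone hF.mono]
  refine ⟨h * (d i)⁻¹, mul_lt_mul_left hhc _, ?_⟩
  have := hb.mem_iff.1 hxh i
  rwa [b.repr_sum_self] at this

theorem linearIndependent_symbol (hF : IsAlgebraFiltration F) (hFM : IsModuleFiltration' F FM)
    (hb : IsFreeFilteredBasis F FM b d) (hbd : ∀ i, b i ∈ FM (d i))
    (h𝒜 : IsAlgebraGrading 𝒜) (h𝒩 : IsModuleGrading 𝒜 𝒩) :
    LinearIndependent A (μ.symbol hbd) := by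
  rw [linearIndependent_iff_injective_fintypeLinearCombination]
  exact LinearMap.injective_of_homogeneous_injective
    (h𝒜.internal.pi_shift fun i => (d i)⁻¹).submodule_iSup_eq_top
    h𝒩.internal.submodule_iSupIndep
    ((Fintype.linearCombination A (μ.symbol hbd)).restrictScalars k)
    (fun c a ha => by
      rw [Submodule.mem_comap, LinearMap.restrictScalars_apply, Fintype.linearCombination_apply]
      exact Submodule.sum_mem _ fun i _ => by
        simpa using h𝒩.smul_mem (ha i trivial) (μ.symbol_mem hbd i))
    (fun _ _ ha h0 =>
      μ.eq_zero_of_sum_smul_symbol_eq_zero hF hFM hb hbd (fun i => ha i trivial) h0)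

section SymbolBasis

variable (hF : IsAlgebraFiltration F) (hFM : IsModuleFiltration' F FM)
  (hb : IsFreeFilteredBasis F FM b d) (h𝒜 : IsAlgebraGrading 𝒜) (h𝒩 : IsModuleGrading 𝒜 𝒩)

def symbolBasis : Module.Basis (Fin n) A N :=
  Module.Basis.mk (μ.linearIndependent_symbol hF hFM hb (hb.basis_mem hF.one_mem) h𝒜 h𝒩)
    (μ.span_symbol hb _ h𝒩)

theorem symbolBasis_apply (i : Fin n) :
    μ.symbolBasis hF hFM hb h𝒜 h𝒩 i = μ.symbol (hb.basis_mem hF.one_mem) i :=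
  Module.Basis.mk_apply _ _ _

theorem isFreeFilteredBasis_symbolBasis :
    IsFreeFilteredBasis 𝒜 𝒩 (μ.symbolBasis hF hFM hb h𝒜 h𝒩) d := by
  intro g
  refine le_antisymm ?_ (iSup_le fun i => ?_)
  · simpa only [symbolBasis_apply] using μ.le_iSup_map_smul_symbol hb _ g
  · rintro _ ⟨a, ha, rfl⟩
    simpa [smulBy, symbolBasis_apply] using
      h𝒩.smul_mem ha (μ.symbol_mem (hb.basis_mem hF.one_mem) i)

theorem homGr_eq_comap (g : G) :
    HomGr 𝒜 𝒩 g = (Submodule.pi Set.univ fun i => 𝒜 (g * d i)).comap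
      ((μ.symbolBasis hF hFM hb h𝒜 h𝒩).constr (M' := A) k).symm.toLinearMap := by
  rw [homGr_eq_homFilt]
  exact (μ.isFreeFilteredBasis_symbolBasis hF hFM hb h𝒜 h𝒩).homFilt_eq_comap
    h𝒜.one_mem h𝒜.mul_mem g

/-- The degreewise symbol map `Θ_g`: `Θ_g φ` sends the symbol of `b i` to the symbol of
`φ (b i)`. -/
def homSymbol (g : G) : HomFilt F FM g →ₗ[k] (N →ₗ[A] A) :=
  ((μ.symbolBasis hF hFM hb h𝒜 h𝒩).constr k).toLinearMap ∘ₗ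
    ρ.symbolValues (hb.basis_mem hF.one_mem) g

theorem homSymbol_mem {g : G} (φ : HomFilt F FM g) :
    μ.homSymbol hF hFM hb h𝒜 h𝒩 g φ ∈ HomGr 𝒜 𝒩 g := by
  rw [μ.homGr_eq_comap hF hFM hb h𝒜 h𝒩, Submodule.mem_comap,
    ← ρ.range_symbolValues hF hb (hb.basis_mem hF.one_mem)]
  simp [homSymbol]

theorem exists_homSymbol_eq {g : G} {ψ : N →ₗ[A] A} (hψ : ψ ∈ HomGr 𝒜 𝒩 g) :
    ∃ φ, μ.homSymbol hF hFM hb h𝒜 h𝒩 g φ = ψ := by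
  rw [μ.homGr_eq_comap hF hFM hb h𝒜 h𝒩, Submodule.mem_comap,
    ← ρ.range_symbolValues hF hb (hb.basis_mem hF.one_mem)] at hψ
  obtain ⟨φ, hφ⟩ := hψ
  exact ⟨φ, by simp [homSymbol, hφ]⟩

theorem homSymbol_eq_zero_iff {g : G} (φ : HomFilt F FM g) :
    μ.homSymbol hF hFM hb h𝒜 h𝒩 g φ = 0 ↔
      φ.1 ∈ ⨆ (h) (_ : h < g), HomFilt F FM h := by
  rw [homSymbol, LinearMap.comp_apply, LinearEquiv.coe_coe, LinearEquiv.map_eq_zero_iff]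
  exact ρ.symbolValues_eq_zero_iff hF hb _ φ

theorem homSymbol_τ {g : G} (φ : HomFilt F FM g) {h : G} (x : FM h) :
    μ.homSymbol hF hFM hb h𝒜 h𝒩 g φ (μ.τ h x) =
      ρ.σ (g * h) ⟨φ.1 x, φ.2 h x x.2⟩ := by
  have hdeg : ∀ i, h * (d i)⁻¹ * (g * d i) = g * h := fun i => by
    rw [← div_eq_mul_inv, div_mul_mul_cancel, mul_comm]
  have hprod : ∀ i, b.repr x i * φ.1 (b i) ∈ F (g * h) := fun i => by
    simpa [hdeg] using hF.mul_mem (hb.mem_iff.1 x.2 i) (φ.2 _ _ (hb.basis_mem hF.one_mem i))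
  have hφx :
      (⟨φ.1 x, φ.2 h x x.2⟩ : F (g * h)) = ∑ i, ⟨b.repr x i * φ.1 (b i), hprod i⟩ :=
    Subtype.ext <| by
      rw [Submodule.coe_sum]
      conv_lhs => dsimp only; rw [← b.sum_repr x.1, map_sum]
      simp only [_root_.map_smul, smul_eq_mul]
  rw [hφx, map_sum, μ.τ_eq_sum hb (hb.basis_mem hF.one_mem), map_sum]
  refine Finset.sum_congr rfl fun i _ => ?_
  rw [_root_.map_smul, ← μ.symbolBasis_apply hF hFM hb h𝒜 h𝒩, homSymbol, LinearMap.comp_apply,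
    LinearEquiv.coe_coe, Module.Basis.constr_basis, smul_eq_mul]
  exact (ρ.σ_mul_of_eq (hdeg i) _ _ _).symm

end SymbolBasis

end GradedModuleRealization

theorem gr_hom_iso_hom_gr_general
    {R M A N : Type*} [Ring R] [Algebra k R]
    [AddCommGroup M] [Module R M] [Module k M] [IsScalarTower k R M]
    [Ring A] [Algebra k A]
    [AddCommGroup N] [Module A N] [Module k N] [IsScalarTower k A N]
    (F : G → Submodule k R) (hF : IsAlgebraFiltration F)
    (FM : G → Submodule k M) (hFM : IsModuleFiltration' F FM)
    {n : ℕ} (b : Module.Basis (Fin n) R M) (d : Fin n → G)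
    (hb : IsFreeFilteredBasis F FM b d)
    (𝒜 : G → Submodule k A) (h𝒜 : IsAlgebraGrading 𝒜)
    (ρ : GradedRealization F A 𝒜)
    (𝒩 : G → Submodule k N) (h𝒩 : IsModuleGrading 𝒜 𝒩)
    (μ : GradedModuleRealization F FM ρ N 𝒩) :
    DirectSum.IsInternal (HomGr 𝒜 𝒩) ∧
    ∃ Θ : ∀ g : G, (HomFilt F FM g) →ₗ[k] (N →ₗ[A] A),
      (∀ (g : G) (φ : HomFilt F FM g), Θ g φ ∈ HomGr 𝒜 𝒩 g) ∧
      (∀ (g : G) (φ : HomFilt F FM g) (h : G) (x : FM h),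
        (Θ g φ) (μ.τ h x) = ρ.σ (g * h) ⟨(φ : M →ₗ[R] R) (x : M), φ.2 h (x : M) x.2⟩) ∧
      (∀ g : G, ∀ ψ ∈ HomGr 𝒜 𝒩 g, ∃ φ : HomFilt F FM g, Θ g φ = ψ) ∧
      (∀ (g : G) (φ : HomFilt F FM g),
        Θ g φ = 0 ↔ (φ : M →ₗ[R] R) ∈ ⨆ (h : G) (_ : h < g), HomFilt F FM h) :=
by
  refine ⟨?_, μ.homSymbol hF hFM hb h𝒜 h𝒩,
    fun _ => μ.homSymbol_mem hF hFM hb h𝒜 h𝒩,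
    fun _ φ _ => μ.homSymbol_τ hF hFM hb h𝒜 h𝒩 φ,
    fun _ _ => μ.exists_homSymbol_eq hF hFM hb h𝒜 h𝒩,
    fun _ => μ.homSymbol_eq_zero_iff hF hFM hb h𝒜 h𝒩⟩
  rw [homGr_eq_homFilt]
  exact (μ.isFreeFilteredBasis_symbolBasis hF hFM hb h𝒜 h𝒩).isInternal_homFilt h𝒜.internal
    h𝒜.one_mem h𝒜.mul_mem

/-- (1) The submodules `HomGr g` form a grading of
`Hom_{gr R}(gr M, gr R)`; (2) the natural degreewise symbol maps realise
`gr Hom_R(M,R) ≅ Hom_{gr R}(gr M, gr R)` as graded modules. -/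
theorem gr_hom_iso_hom_gr
    {R M A N : Type*} [Ring R] [Algebra k R]
    [AddCommGroup M] [Module R M] [Module k M] [IsScalarTower k R M]
    [Ring A] [Algebra k A]
    [AddCommGroup N] [Module A N] [Module k N] [IsScalarTower k A N]
    (F : G → Submodule k R) (hF : IsAlgebraFiltration F)
    (hnn : ∀ g < (1 : G), F g = ⊥)
    (FM : G → Submodule k M) (hFM : IsModuleFiltration' F FM)
    {n : ℕ} (b : Module.Basis (Fin n) R M) (d : Fin n → G)
    (hb : IsFreeFilteredBasis F FM b d)
    (𝒜 : G → Submodule k A) (h𝒜 : IsAlgebraGrading 𝒜)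
    (ρ : GradedRealization F A 𝒜)
    (𝒩 : G → Submodule k N) (h𝒩 : IsModuleGrading 𝒜 𝒩)
    (μ : GradedModuleRealization F FM ρ N 𝒩) :
    DirectSum.IsInternal (HomGr 𝒜 𝒩) ∧
    ∃ Θ : ∀ g : G, (HomFilt F FM g) →ₗ[k] (N →ₗ[A] A),
      (∀ (g : G) (φ : HomFilt F FM g), Θ g φ ∈ HomGr 𝒜 𝒩 g) ∧
      (∀ (g : G) (φ : HomFilt F FM g) (h : G) (x : FM h),
        (Θ g φ) (μ.τ h x) = ρ.σ (g * h) ⟨(φ : M →ₗ[R] R) (x : M), φ.2 h (x : M) x.2⟩) ∧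
      (∀ g : G, ∀ ψ ∈ HomGr 𝒜 𝒩 g, ∃ φ : HomFilt F FM g, Θ g φ = ψ) ∧
      (∀ (g : G) (φ : HomFilt F FM g),
        Θ g φ = 0 ↔ (φ : M →ₗ[R] R) ∈ ⨆ (h : G) (_ : h < g), HomFilt F FM h) :=
  gr_hom_iso_hom_gr_general F hF FM hFM b d hb 𝒜 h𝒜 ρ 𝒩 h𝒩 μ
end
end
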